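/- arXiv:0811.2439 — 5 statements merged into one kernel-verified Lean document; each statement's English description precedes it below -/
import Mathlib

section
/- Let k be an algebraically closed field and S a k-algebra with a complete set of orthogonal idempotents L. If e ∈ L and the corner ring eSe is commutative, then for every simple left S-module V (which is finite-dimensional over k, or on which Schur's lemma gives End_S(V) = k), the k-dimension of eV is at most 1. -/
/-!
If `x, y ∈ eV` were linearly independent, the Jacobson density theorem (applicable because
every `S`-endomorphism of `V` is a scalar, so every `k`-linear map commutes with them) would
give `s, t ∈ S` acting on `x, y` as `(x, y) ↦ (0, x)` and `(x, y) ↦ (y, 0)`. Then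
`(ese)(ete) x = x` while `(ete)(ese) x = 0`, contradicting the commutativity of `eSe`.
-/

theorem LinearIndependent.exists_linearMap_apply_eq {k V W ι : Type*} [Field k]
    [AddCommGroup V] [Module k V] [AddCommGroup W] [Module k W]
    {v : ι → V} (hv : LinearIndependent k v) (w : ι → W) :
    ∃ f : V →ₗ[k] W, ∀ i, f (v i) = w i := by
  obtain ⟨f, hf⟩ := LinearMap.exists_extend ((Module.Basis.span hv).constr k w)
  refine ⟨f, fun i => ?_⟩
  have := congr($hf (Module.Basis.span hv i))
  rwa [LinearMap.comp_apply, Module.Basis.constr_basis, Submodule.subtype_apply,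
    Module.Basis.span_apply] at this

theorem jacobson_density_of_forall_end_eq_smul {k S V : Type*} [Semiring k] [Ring S]
    [AddCommGroup V] [Module S V] [Module k V] [IsSemisimpleModule S V]
    (hSchur : ∀ f : V →ₗ[S] V, ∃ c : k, ∀ v : V, f v = c • v)
    (g : V →ₗ[k] V) (s : Finset V) : ∃ r : S, ∀ m ∈ s, g m = r • m :=
  jacobson_density
    { toFun := g
      map_add' := g.map_add
      map_smul' := fun φ v => by
        obtain ⟨c, hc⟩ := hSchur φ
        simp only [Module.End.smul_def, hc, map_smul, RingHom.id_apply] } s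

theorem eq_zero_of_commute_corner {S M : Type*} [Ring S] [AddCommGroup M] [Module S M]
    {e s t : S} {x y : M} (hcomm : Commute (e * s * e) (e * t * e))
    (hex : e • x = x) (hey : e • y = y) (hsx : s • x = 0) (hsy : s • y = x) (htx : t • x = y) :
    x = 0 :=
  calc x = ((e * s * e) * (e * t * e)) • x := by simp only [mul_smul, hex, htx, hey, hsy]
    _ = ((e * t * e) * (e * s * e)) • x := by rw [hcomm.eq]
    _ = 0 := by simp only [mul_smul, hex, hsx, smul_zero]

theorem stmt1_general {k : Type*} [Field k]
    {S : Type*} [Ring S]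
    {V : Type*} [AddCommGroup V] [Module S V] [Module k V]
    (L : Finset S)
    (hidem : ∀ e ∈ L, IsIdempotentElem e)
    (e : S) (he : e ∈ L)
    (hcomm : ∀ s t : S, (e * s * e) * (e * t * e) = (e * t * e) * (e * s * e))
    (hV : IsSimpleModule S V)
    (hSchur : ∀ f : V →ₗ[S] V, ∃ c : k, ∀ v : V, f v = c • v) :
    ∀ v w : V, ∃ c d : k, (c ≠ 0 ∨ d ≠ 0) ∧ c • (e • v) + d • (e • w) = 0 := by
  classical
  intro v w
  have hproj : ∀ u : V, e • e • u = e • u := fun u => by rw [smul_smul, hidem e he]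
  by_contra hdep
  have hli : LinearIndependent k ![e • v, e • w] :=
    LinearIndependent.pair_iff.2 fun c d h => by_contra fun hcd => hdep ⟨c, d, not_and_or.1 hcd, h⟩
  obtain ⟨f, hf⟩ := hli.exists_linearMap_apply_eq ![0, e • v]
  obtain ⟨g, hg⟩ := hli.exists_linearMap_apply_eq ![e • w, 0]
  obtain ⟨s, hs⟩ := jacobson_density_of_forall_end_eq_smul hSchur f {e • v, e • w}
  obtain ⟨t, ht⟩ := jacobson_density_of_forall_end_eq_smul hSchur g {e • v, e • w}
  refine hli.ne_zero 0 (eq_zero_of_commute_corner (hcomm s t) (hproj v) (hproj w) ?_ ?_ ?_)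
  · simpa using (hs _ (by simp)).symm.trans (hf 0)
  · simpa using (hs _ (by simp)).symm.trans (hf 1)
  · simpa using (ht _ (by simp)).symm.trans (hg 0)

/-- Let `k` be an algebraically closed field and `S` a `k`-algebra with a
complete set of orthogonal idempotents `L`.  If `e ∈ L` and the corner ring `eSe` is
commutative, then for every simple left `S`-module `V` on which Schur's lemma gives
`End_S(V) = k` (e.g. `V` finite dimensional over `k`), the `k`-dimension of `eV` is at
most `1`, i.e. any two elements of `eV` are `k`-linearly dependent. -/
theorem stmt1 {k : Type*} [Field k] [IsAlgClosed k]
    {S : Type*} [Ring S] [Algebra k S]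
    {V : Type*} [AddCommGroup V] [Module S V] [Module k V] [IsScalarTower k S V]
    (L : Finset S)
    (hidem : ∀ e ∈ L, IsIdempotentElem e)
    (horth : ∀ e ∈ L, ∀ f ∈ L, e ≠ f → e * f = 0)
    (hsum : ∑ e ∈ L, e = 1)
    (e : S) (he : e ∈ L)
    (hcomm : ∀ s t : S, (e * s * e) * (e * t * e) = (e * t * e) * (e * s * e))
    (hV : IsSimpleModule S V)
    (hSchur : ∀ f : V →ₗ[S] V, ∃ c : k, ∀ v : V, f v = c • v) :
    ∀ v w : V, ∃ c d : k, (c ≠ 0 ∨ d ≠ 0) ∧ c • (e • v) + d • (e • w) = 0 :=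
  stmt1_general L hidem e he hcomm hV hSchur
end

section
/- Let A be a k-algebra with an impression (τ, B) such that A is a finitely generated module over its center. If B is a prime ring (an integral domain), then A is a prime ring and the center Z(A) is an integral domain. -/
/-!
If `τ a ≠ 0` and `τ b ≠ 0`, pick nonzero entries `x` of `τ a` and `y` of `τ b`. Since `B` is a
domain of finite type over a field, it is a reduced Jacobson ring, so `xy ≠ 0` lies outside some
maximal ideal; the nonempty open set `D(xy) ⊆ Max B` then meets the dense set `U` in a point `m`
at which `τ_m a ≠ 0`, `τ_m b ≠ 0` and `τ_m` is simple. For a simple representation `ρ` the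
`A`-orbit of a nonzero column of `ρ b` is everything, so `ρ a ρ(r) ρ b ≠ 0` for some `r`;
hence `a r b ≠ 0`. For central `a, b` one has `a r b = r (a b)`, so the center has no zero
divisors.
-/

/-- The Zariski topology on the maximal spectrum, induced from the prime spectrum. -/
noncomputable def maxSpecTopology (B : Type*) [CommRing B] :
    TopologicalSpace (MaximalSpectrum B) :=
  TopologicalSpace.induced MaximalSpectrum.toPrimeSpectrum inferInstance

section SimpleRepresentation

open Matrix

variable {A K n : Type*} [Ring A] [CommRing K] [Fintype n] [DecidableEq n]

/-- `ρ` makes `n → K` a simple `A`-module, phrased with additive subgroups so that no `A`-module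
structure on `n → K` has to be chosen. -/
def IsSimpleMatrixRep (ρ : A →+* Matrix n n K) : Prop :=
  ∀ W : AddSubgroup (n → K), (∀ (a : A) (v : n → K), v ∈ W → ρ a *ᵥ v ∈ W) → W = ⊥ ∨ W = ⊤

theorem Matrix.exists_mulVec_single_one_ne_zero {R m : Type*} [NonAssocSemiring R]
    {M : Matrix m n R} (hM : M ≠ 0) : ∃ j, M *ᵥ Pi.single j 1 ≠ 0 := by
  contrapose! hM
  ext i j
  simpa [mulVec_single_one] using congrFun (hM j) i

theorem IsSimpleMatrixRep.eq_zero_or_eq_zero_of_forall_mul_mul {ρ : A →+* Matrix n n K}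
    (hρ : IsSimpleMatrixRep ρ) {a b : A} (hab : ∀ r, ρ (a * r * b) = 0) :
    ρ a = 0 ∨ ρ b = 0 := by
  by_contra! h
  obtain ⟨j', hw⟩ := exists_mulVec_single_one_ne_zero h.2
  set w := ρ b *ᵥ Pi.single j' 1
  let W : AddSubgroup (n → K) := ((mulVec.addMonoidHomLeft w).comp ρ.toAddMonoidHom).range
  have hW : W = ⊤ := by
    refine (hρ W ?_).resolve_left fun hbot => hw ?_
    · rintro c _ ⟨r, rfl⟩
      exact ⟨c * r, by simp [mulVec.addMonoidHomLeft, mulVec_mulVec]⟩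
    · have hwW : w ∈ W := ⟨1, by simp [mulVec.addMonoidHomLeft]⟩
      rwa [hbot, AddSubgroup.mem_bot] at hwW
  obtain ⟨j, hj⟩ := exists_mulVec_single_one_ne_zero h.1
  obtain ⟨r, hr⟩ : Pi.single j 1 ∈ W := hW ▸ AddSubgroup.mem_top _
  apply hj
  change ρ r *ᵥ (ρ b *ᵥ Pi.single j' 1) = _ at hr
  rw [← hr, mulVec_mulVec, mulVec_mulVec, ← map_mul, ← map_mul, hab, zero_mulVec]

end SimpleRepresentation

section Reduction

variable {B : Type*} [CommRing B] [IsJacobsonRing B]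

theorem MaximalSpectrum.exists_mem_of_dense_of_ne_zero [IsReduced B]
    {U : Set (MaximalSpectrum B)} (hU : @Dense _ (maxSpecTopology B) U) {x : B} (hx : x ≠ 0) :
    ∃ p ∈ U, x ∉ p.asIdeal := by
  let := maxSpecTopology B
  have hxJ : x ∉ (⊥ : Ideal B).jacobson := by
    rwa [IsJacobsonRing.out ‹_› Ideal.isRadical_bot]
  simp only [Ideal.jacobson, Ideal.mem_sInf, not_forall] at hxJ
  obtain ⟨J, ⟨-, hJ⟩, hxJ⟩ := hxJ
  obtain ⟨p, hpx, hpU⟩ := hU.inter_open_nonempty {p | x ∉ p.asIdeal}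
    ⟨_, (PrimeSpectrum.basicOpen x).isOpen, rfl⟩ ⟨⟨J, hJ⟩, hxJ⟩
  exact ⟨p, hpU, hpx⟩

theorem MaximalSpectrum.exists_mem_matrix_map_ne_zero [IsDomain B] {m n : Type*}
    {U : Set (MaximalSpectrum B)} (hU : @Dense _ (maxSpecTopology B) U)
    {M N : Matrix m n B} (hM : M ≠ 0) (hN : N ≠ 0) :
    ∃ p ∈ U, M.map (Ideal.Quotient.mk p.asIdeal) ≠ 0 ∧ N.map (Ideal.Quotient.mk p.asIdeal) ≠ 0 := by
  obtain ⟨i, j, hx⟩ : ∃ i j, M i j ≠ 0 := by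
    contrapose! hM
    exact Matrix.ext hM
  obtain ⟨i', j', hy⟩ : ∃ i j, N i j ≠ 0 := by
    contrapose! hN
    exact Matrix.ext hN
  obtain ⟨p, hpU, hp⟩ := exists_mem_of_dense_of_ne_zero hU (mul_ne_zero hx hy)
  refine ⟨p, hpU, fun h => hp ?_, fun h => hp ?_⟩
  · have hxp := congr_fun₂ h i j
    simp only [Matrix.map_apply, Matrix.zero_apply, Ideal.Quotient.eq_zero_iff_mem] at hxp
    exact Ideal.mul_mem_right _ _ hxp
  · have hyp := congr_fun₂ h i' j'
    simp only [Matrix.map_apply, Matrix.zero_apply, Ideal.Quotient.eq_zero_iff_mem] at hyp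
    exact Ideal.mul_mem_left _ _ hyp

theorem eq_zero_or_eq_zero_of_forall_mul_mul_of_dense_simple_reductions [IsDomain B]
    {A n : Type*} [Ring A] [Fintype n] [DecidableEq n]
    (τ : A →+* Matrix n n B) (hτ : Function.Injective τ)
    {U : Set (MaximalSpectrum B)} (hU : @Dense _ (maxSpecTopology B) U)
    (hsimple : ∀ p ∈ U, IsSimpleMatrixRep ((Ideal.Quotient.mk p.asIdeal).mapMatrix.comp τ))
    {a b : A} (hab : ∀ r, a * r * b = 0) : a = 0 ∨ b = 0 := by
  by_contra! h
  obtain ⟨p, hpU, ha, hb⟩ := MaximalSpectrum.exists_mem_matrix_map_ne_zero hU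
    ((map_ne_zero_iff τ hτ).2 h.1) ((map_ne_zero_iff τ hτ).2 h.2)
  exact ((hsimple p hpU).eq_zero_or_eq_zero_of_forall_mul_mul fun r => by simp [hab]).elim ha hb

end Reduction

theorem Subalgebra.noZeroDivisors_center {R A : Type*} [CommSemiring R] [Semiring A]
    [Algebra R A] (hA : ∀ a b : A, (∀ r : A, a * r * b = 0) → a = 0 ∨ b = 0) :
    NoZeroDivisors (Subalgebra.center R A) where
  eq_zero_or_eq_zero_of_mul_eq_zero {a b} hab := by
    have hcomm : ∀ r : A, (a : A) * r * b = r * ((a * b : center R A) : A) := fun r => by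
      rw [← Subalgebra.mem_center_iff.1 a.2 r, mul_assoc, Subalgebra.coe_mul]
    refine (hA a b fun r => ?_).imp Subtype.ext Subtype.ext
    rw [hcomm, hab, Subalgebra.coe_zero, mul_zero]

theorem stmt3_general {k : Type*} [Field k]
    {A : Type} [Ring A] [Algebra k A]
    {B : Type*} [CommRing B] [Algebra k B] [Algebra.FiniteType k B] [IsDomain B]
    {d : ℕ}
    (τ : A →ₐ[k] Matrix (Fin d) (Fin d) B)
    (hinj : Function.Injective τ)
    (U : Set (MaximalSpectrum B))
    (hUdense : @Dense _ (maxSpecTopology B) U)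
    (hUsimple : ∀ m ∈ U,
      (∀ W : AddSubgroup (Fin d → B ⧸ m.asIdeal),
        (∀ (a : A) (v : Fin d → B ⧸ m.asIdeal), v ∈ W →
          ((τ a).map (Ideal.Quotient.mk m.asIdeal)).mulVec v ∈ W) →
        W = ⊥ ∨ W = ⊤)) :
    (∀ a b : A, (∀ r : A, a * r * b = 0) → a = 0 ∨ b = 0) ∧
      (∀ a b : Subalgebra.center k A, a * b = 0 → a = 0 ∨ b = 0) := by
  have : IsJacobsonRing B := isJacobsonRing_of_finiteType (A := k)
  have hprime : ∀ a b : A, (∀ r : A, a * r * b = 0) → a = 0 ∨ b = 0 := fun _ _ =>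
    eq_zero_or_eq_zero_of_forall_mul_mul_of_dense_simple_reductions τ.toRingHom hinj hUdense hUsimple
  have := Subalgebra.noZeroDivisors_center (R := k) hprime
  exact ⟨hprime, fun _ _ => eq_zero_or_eq_zero_of_mul_eq_zero⟩

/-- Let `A` be a `k`-algebra with an impression `(τ, B)` (an injective
algebra homomorphism `τ : A → M_d(B)` into matrices over a finitely generated commutative
`k`-algebra `B`, whose reductions modulo `m` are simple representations for all `m` in a
dense open subset of `Max B`), and suppose `A` is a finitely generated module over its
center.  If `B` is a prime ring (an integral domain), then `A` is a prime ring
(`a r b = 0` for all `r` implies `a = 0` or `b = 0`) and the center `Z(A)` is an integral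
domain. -/
theorem stmt3 {k : Type*} [Field k] [IsAlgClosed k]
    {A : Type} [Ring A] [Algebra k A] [Algebra.FiniteType k A]
    {B : Type*} [CommRing B] [Algebra k B] [Algebra.FiniteType k B] [IsDomain B]
    {d : ℕ} (hd : 0 < d)
    (τ : A →ₐ[k] Matrix (Fin d) (Fin d) B)
    (hinj : Function.Injective τ)
    (U : Set (MaximalSpectrum B))
    (hUopen : @IsOpen _ (maxSpecTopology B) U)
    (hUdense : @Dense _ (maxSpecTopology B) U)
    (hUsimple : ∀ m ∈ U,
      (∀ W : AddSubgroup (Fin d → B ⧸ m.asIdeal),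
        (∀ (a : A) (v : Fin d → B ⧸ m.asIdeal), v ∈ W →
          ((τ a).map (Ideal.Quotient.mk m.asIdeal)).mulVec v ∈ W) →
        W = ⊥ ∨ W = ⊤))
    -- `A` is a finitely generated module over its center:
    (hfin : Module.Finite (Subalgebra.center k A) A) :
    (∀ a b : A, (∀ r : A, a * r * b = 0) → a = 0 ∨ b = 0) ∧
      (∀ a b : Subalgebra.center k A, a * b = 0 → a = 0 ∨ b = 0) :=
  stmt3_general τ hinj U hUdense hUsimple
end

section
/- Let A be a prime quiver algebra with finite vertex set, satisfying e_i A e_i = Z e_i for each vertex i, where Z is the center of A. If a ∈ e_i A and b ∈ A e_i are both nonzero, then the product b a is nonzero. -/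
/-!
If `b * a = 0`, every `x = a * r * b` lies in the corner `e_i A e_i = Z e_i` and satisfies
`x * x = a * r * (b * a) * r * b = 0`. Writing `x = z * e_i` and `e_i * s * e_i = w * e_i` with
`z, w` central gives `x * s * x = z * (w * e_i) * x = w * x * x = 0` for every `s`, so `x = 0` by
primeness. Hence `a * r * b = 0` for all `r`, and primeness again forces `a = 0` or `b = 0`.
-/

section CentralCorner

variable {A : Type*} [Ring A] {e x : A}

theorem mul_mul_eq_zero_of_mul_self_eq_zero_of_centralCorner
    (hcorner : ∀ s : A, ∃ w ∈ Set.center A, e * s * e = w * e)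
    (hex : e * x = x) (hxe : x * e = x) (hxx : x * x = 0) (s : A) : x * s * x = 0 := by
  obtain ⟨z, -, hz⟩ := hcorner x
  obtain ⟨w, hw, hw'⟩ := hcorner s
  have hxz : x = z * e := by rw [← hz, hex, hxe]
  calc x * s * x = z * (e * s * e) * x := by
        nth_rw 1 [hxz, ← hex]; simp only [mul_assoc]
    _ = w * (x * x) := by
        rw [hw', ← mul_assoc, Semigroup.mem_center_iff.mp hw z, mul_assoc w z e, ← hxz,
          mul_assoc]
    _ = 0 := by rw [hxx, mul_zero]

theorem eq_zero_of_mul_self_eq_zero_of_centralCorner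
    (hprime : ∀ a b : A, (∀ r : A, a * r * b = 0) → a = 0 ∨ b = 0)
    (hcorner : ∀ s : A, ∃ w ∈ Set.center A, e * s * e = w * e)
    (hex : e * x = x) (hxe : x * e = x) (hxx : x * x = 0) : x = 0 :=
  (hprime x x (mul_mul_eq_zero_of_mul_self_eq_zero_of_centralCorner hcorner hex hxe hxx)).elim id id

end CentralCorner

theorem stmt5_general {k : Type*} [Field k] {A : Type*} [Ring A] [Algebra k A]
    {I : Type*}
    (e : I → A)
    -- the corner ring condition `e_i A e_i = Z e_i`:
    (hcorner : ∀ (i : I) (x : A),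
      ∃ z ∈ Subalgebra.center k A, e i * x * e i = z * e i)
    -- `A` is prime:
    (hprime : ∀ a b : A, (∀ r : A, a * r * b = 0) → a = 0 ∨ b = 0)
    (i : I) (a b : A)
    (ha : e i * a = a) (hb : b * e i = b)
    (ha0 : a ≠ 0) (hb0 : b ≠ 0) :
    b * a ≠ 0 := by
  intro hba
  have hcorner_i : ∀ s : A, ∃ w ∈ Set.center A, e i * s * e i = w * e i := hcorner i
  have hcross : ∀ r : A, a * r * b = 0 := fun r =>
    eq_zero_of_mul_self_eq_zero_of_centralCorner hprime hcorner_i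
      (by rw [← mul_assoc, ← mul_assoc, ha]) (by rw [mul_assoc, hb])
      (by rw [show a * r * b * (a * r * b) = a * r * (b * a) * (r * b) by noncomm_ring, hba,
        mul_zero, zero_mul])
  exact (hprime a b hcross).elim ha0 hb0

/-- Let `A` be a prime quiver algebra (over a field `k`) with a finite
complete set of orthogonal vertex idempotents `e i`, satisfying `e_i A e_i = Z e_i` for
each vertex `i`, where `Z` is the center of `A`.  If `a ∈ e_i A` and `b ∈ A e_i` are both
nonzero, then the product `b * a` is nonzero. -/
theorem stmt5 {k : Type*} [Field k] {A : Type*} [Ring A] [Algebra k A]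
    {I : Type*} [Fintype I]
    (e : I → A)
    (hidem : ∀ i, IsIdempotentElem (e i))
    (horth : ∀ i j, i ≠ j → e i * e j = 0)
    (hsum : ∑ i, e i = 1)
    -- the corner ring condition `e_i A e_i = Z e_i`:
    (hcorner : ∀ (i : I) (x : A),
      ∃ z ∈ Subalgebra.center k A, e i * x * e i = z * e i)
    -- `A` is prime:
    (hprime : ∀ a b : A, (∀ r : A, a * r * b = 0) → a = 0 ∨ b = 0)
    (i : I) (a b : A)
    (ha : e i * a = a) (hb : b * e i = b)
    (ha0 : a ≠ 0) (hb0 : b ≠ 0) :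
    b * a ≠ 0 :=
  stmt5_general e hcorner hprime i a b ha hb ha0 hb0
end

section
/- The center of the conifold quiver algebra is isomorphic to k[a,b,c,d]/(ab − cd). Here the conifold algebra A = kQ/∂W has quiver Q with two vertices 1, 2, arrows x_1, x_2 from 2 to 1 and y_1, y_2 from 1 to 2, and superpotential W = y_1 x_2 y_2 x_1 − y_2 x_2 y_1 x_1. -/
/-!
The elements `z_ij = x_i y_j + y_j x_i` are central, satisfy `z₁₁ z₂₂ = z₁₂ z₂₁` by the
cyclic-derivative relations, and `A` is spanned over `k[z]` by the vertices and arrows. Cutting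
a central element with the idempotents writes it as `c₁ e₁ + c₂ e₂` with `c₁, c₂ ∈ k[z]`, and
commuting with `x₁` forces `c₁ = c₂`, so `k[a,b,c,d] → Z(A)` is onto.

For its kernel, represent `A` by `2 × 2` matrices over `k[x₁, x₂, y₁, y₂]`, each arrow going to
its own variable: then `z_ij` becomes the scalar `x_i y_j`, and the kernel is that of the Segre
map `a, b, c, d ↦ x₁y₁, x₂y₂, x₁y₂, x₂y₁`. Modulo `ab − cd` every polynomial reduces to one whose
monomials are not divisible by `ab`, and the Segre map is injective on those monomials.
-/

namespace Stmt12

/-- Generators of the conifold quiver path algebra: two vertices `v1, v2`, two arrows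
`x1, x2 : 2 → 1` and two arrows `y1, y2 : 1 → 2`. -/
inductive Gen : Type
  | x1 | x2 | y1 | y2 | v1 | v2
  deriving DecidableEq

variable (k : Type*) [Field k]

open FreeAlgebra

abbrev F := FreeAlgebra k Gen

noncomputable def X1 : F k := ι k Gen.x1
noncomputable def X2 : F k := ι k Gen.x2
noncomputable def Y1 : F k := ι k Gen.y1
noncomputable def Y2 : F k := ι k Gen.y2
noncomputable def E1 : F k := ι k Gen.v1
noncomputable def E2 : F k := ι k Gen.v2

/-- Relations defining the conifold superpotential algebra `A = kQ/∂W`,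
`W = y1 x2 y2 x1 − y2 x2 y1 x1`: the path algebra relations (the vertices form a complete
set of orthogonal idempotents and arrows compose according to heads and tails) together
with the cyclic derivatives of `W`:
`∂_{x1}W = y1x2y2 − y2x2y1`, `∂_{x2}W = y2x1y1 − y1x1y2`,
`∂_{y1}W = x2y2x1 − x1y2x2`, `∂_{y2}W = x1y1x2 − x2y1x1`. -/
noncomputable def rel : F k → F k → Prop := fun a b =>
  (a = E1 k * E1 k ∧ b = E1 k) ∨ (a = E2 k * E2 k ∧ b = E2 k) ∨
  (a = E1 k * E2 k ∧ b = 0) ∨ (a = E2 k * E1 k ∧ b = 0) ∨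
  (a = E1 k + E2 k ∧ b = 1) ∨
  (a = E1 k * X1 k ∧ b = X1 k) ∨ (a = X1 k * E2 k ∧ b = X1 k) ∨
  (a = E1 k * X2 k ∧ b = X2 k) ∨ (a = X2 k * E2 k ∧ b = X2 k) ∨
  (a = E2 k * Y1 k ∧ b = Y1 k) ∨ (a = Y1 k * E1 k ∧ b = Y1 k) ∨
  (a = E2 k * Y2 k ∧ b = Y2 k) ∨ (a = Y2 k * E1 k ∧ b = Y2 k) ∨
  (a = Y1 k * X2 k * Y2 k ∧ b = Y2 k * X2 k * Y1 k) ∨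
  (a = Y2 k * X1 k * Y1 k ∧ b = Y1 k * X1 k * Y2 k) ∨
  (a = X2 k * Y2 k * X1 k ∧ b = X1 k * Y2 k * X2 k) ∨
  (a = X1 k * Y1 k * X2 k ∧ b = X2 k * Y1 k * X1 k)

/-- The conifold superpotential algebra. -/
noncomputable abbrev A := RingQuot (rel k)

open MvPolynomial

section Segre

variable (R : Type*) [CommRing R]

-- `X 0, X 1, X 2, X 3` play the role of `a, b, c, d` in the source and of `x₁, x₂, y₁, y₂` in the
-- target.
noncomputable def segre : MvPolynomial (Fin 4) R →ₐ[R] MvPolynomial (Fin 4) R :=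
  aeval ![X 0 * X 2, X 1 * X 3, X 0 * X 3, X 1 * X 2]

noncomputable def segreExp (m : Fin 4 →₀ ℕ) : Fin 4 →₀ ℕ :=
  Finsupp.equivFunOnFinite.symm ![m 0 + m 2, m 1 + m 3, m 0 + m 3, m 1 + m 2]

def reducedExponents : Set (Fin 4 →₀ ℕ) := {m | m 0 = 0 ∨ m 1 = 0}

variable {R}

lemma monomial_eq_C_mul_X_pow (m : Fin 4 →₀ ℕ) (c : R) :
    monomial m c = C c * X 0 ^ m 0 * X 1 ^ m 1 * X 2 ^ m 2 * X 3 ^ m 3 := by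
  rw [monomial_eq, Finsupp.prod_fintype _ _ (fun _ => pow_zero _), Fin.prod_univ_four]
  ring

lemma segre_monomial (m : Fin 4 →₀ ℕ) (c : R) :
    segre R (monomial m c) = monomial (segreExp m) c := by
  simp only [monomial_eq_C_mul_X_pow, map_mul, map_pow, segre, aeval_C, aeval_X, algebraMap_eq,
    segreExp, Finsupp.coe_equivFunOnFinite_symm, Matrix.cons_val, pow_add]
  ring

lemma segreExp_injOn : Set.InjOn segreExp reducedExponents := by
  intro m hm m' hm' h
  have h0 := DFunLike.congr_fun h 0
  have h1 := DFunLike.congr_fun h 1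
  have h2 := DFunLike.congr_fun h 2
  have h3 := DFunLike.congr_fun h 3
  simp only [segreExp, Finsupp.coe_equivFunOnFinite_symm, Matrix.cons_val] at h0 h1 h2 h3
  simp only [reducedExponents, Set.mem_ofPred_eq] at hm hm'
  ext i
  fin_cases i <;> simp <;> omega

lemma coeff_segre_segreExp {v : MvPolynomial (Fin 4) R}
    (hv : v ∈ restrictSupport R reducedExponents) {m : Fin 4 →₀ ℕ} (hm : m ∈ reducedExponents) :
    coeff (segreExp m) (segre R v) = coeff m v := by
  conv_lhs => rw [v.as_sum, map_sum]
  simp only [segre_monomial, coeff_sum, coeff_monomial]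
  rw [Finset.sum_eq_single m]
  · simp
  · exact fun m' hm' hne => if_neg fun h => hne (segreExp_injOn (hv hm') hm h)
  · intro hm; simp [notMem_support_iff.mp hm]

lemma eq_zero_of_segre_eq_zero {v : MvPolynomial (Fin 4) R}
    (hv : v ∈ restrictSupport R reducedExponents) (h : segre R v = 0) : v = 0 := by
  ext m
  by_cases hm : m ∈ v.support
  · rw [← coeff_segre_segreExp hv (hv hm), h, coeff_zero, coeff_zero]
  · simpa using hm

lemma exists_reduced_sub_mem_span (p : MvPolynomial (Fin 4) R) :
    ∃ v ∈ restrictSupport R reducedExponents, p - v ∈ Ideal.span {X 0 * X 1 - X 2 * X 3} := by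
  induction p using MvPolynomial.induction_on' with
  | monomial m c =>
    obtain ⟨j, a, b, h0, h1, hab⟩ : ∃ j a b, m 0 = j + a ∧ m 1 = j + b ∧ (a = 0 ∨ b = 0) :=
      ⟨min (m 0) (m 1), m 0 - min (m 0) (m 1), m 1 - min (m 0) (m 1), by omega, by omega, by omega⟩
    set m' : Fin 4 →₀ ℕ := Finsupp.equivFunOnFinite.symm ![a, b, m 2 + j, m 3 + j]
    refine ⟨monomial m' c, by simp [m', reducedExponents, hab], ?_⟩
    have key : monomial m c - monomial m' c =
        C c * X 0 ^ a * X 1 ^ b * X 2 ^ m 2 * X 3 ^ m 3 * ((X 0 * X 1) ^ j - (X 2 * X 3) ^ j) := by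
      simp only [m', monomial_eq_C_mul_X_pow, h0, h1, Finsupp.coe_equivFunOnFinite_symm,
        Matrix.cons_val]
      ring
    rw [key, Ideal.mem_span_singleton]
    exact (sub_dvd_pow_sub_pow _ _ j).mul_left _
  | add p q hp hq =>
    obtain ⟨v, hv, hpv⟩ := hp
    obtain ⟨w, hw, hqw⟩ := hq
    exact ⟨v + w, add_mem hv hw, by simpa [add_sub_add_comm] using add_mem hpv hqw⟩

theorem ker_segre : RingHom.ker (segre R) = Ideal.span {X 0 * X 1 - X 2 * X 3} := by
  have hq : Ideal.span {X 0 * X 1 - X 2 * X 3} ≤ RingHom.ker (segre R) := by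
    rw [Ideal.span_singleton_le_iff_mem, RingHom.mem_ker]
    simp only [segre, map_sub, map_mul, aeval_X, Matrix.cons_val]
    ring
  refine le_antisymm (fun p hp => ?_) hq
  obtain ⟨v, hv, hpv⟩ := exists_reduced_sub_mem_span p
  have hv0 : segre R v = 0 := by
    rw [← sub_sub_cancel p v, map_sub, RingHom.mem_ker.mp hp, RingHom.mem_ker.mp (hq hpv),
      sub_zero]
  simpa [eq_zero_of_segre_eq_zero hv hv0] using hpv

end Segre

variable {k}

noncomputable def mk : F k →ₐ[k] A k := RingQuot.mkAlgHom k (rel k)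

variable (k)

noncomputable def e₁ : A k := mk (E1 k)
noncomputable def e₂ : A k := mk (E2 k)
-- `x k i` and `y k i` are the paper's `x_{i+1}` and `y_{i+1}`.
noncomputable def x : Fin 2 → A k := ![mk (X1 k), mk (X2 k)]
noncomputable def y : Fin 2 → A k := ![mk (Y1 k), mk (Y2 k)]

variable {k}

lemma mk_surjective : Function.Surjective (mk : F k → A k) :=
  RingQuot.mkAlgHom_surjective k (rel k)

lemma mk_eq_of_rel {a b : F k} (h : rel k a b) : mk a = mk b := RingQuot.mkAlgHom_rel k h

section Relations

variable (i j i' j' : Fin 2) (t : A k)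

@[simp] lemma e₁_mul_e₁ : e₁ k * e₁ k = e₁ k := by
  rw [e₁, ← map_mul]; exact mk_eq_of_rel (by simp [rel])
@[simp] lemma e₂_mul_e₂ : e₂ k * e₂ k = e₂ k := by
  rw [e₂, ← map_mul]; exact mk_eq_of_rel (by simp [rel])
@[simp] lemma e₁_mul_e₂ : e₁ k * e₂ k = 0 := by
  rw [e₁, e₂, ← map_mul, ← map_zero mk]; exact mk_eq_of_rel (by simp [rel])
@[simp] lemma e₂_mul_e₁ : e₂ k * e₁ k = 0 := by
  rw [e₁, e₂, ← map_mul, ← map_zero mk]; exact mk_eq_of_rel (by simp [rel])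
lemma e₁_add_e₂ : e₁ k + e₂ k = 1 := by
  rw [e₁, e₂, ← map_add, ← map_one mk]; exact mk_eq_of_rel (by simp [rel])

@[simp] lemma e₁_mul_x : e₁ k * x k i = x k i := by
  fin_cases i <;> simp [x, e₁, ← map_mul] <;> exact mk_eq_of_rel (by simp [rel])
@[simp] lemma x_mul_e₂ : x k i * e₂ k = x k i := by
  fin_cases i <;> simp [x, e₂, ← map_mul] <;> exact mk_eq_of_rel (by simp [rel])
@[simp] lemma e₂_mul_y : e₂ k * y k j = y k j := by
  fin_cases j <;> simp [y, e₂, ← map_mul] <;> exact mk_eq_of_rel (by simp [rel])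
@[simp] lemma y_mul_e₁ : y k j * e₁ k = y k j := by
  fin_cases j <;> simp [y, e₁, ← map_mul] <;> exact mk_eq_of_rel (by simp [rel])

lemma x_mul_y_mul_x_comm : x k i * (y k j * x k i') = x k i' * (y k j * x k i) := by
  fin_cases i <;> fin_cases i' <;> fin_cases j <;> simp [x, y, ← map_mul, ← mul_assoc] <;>
    first | (apply mk_eq_of_rel; simp [rel]; done) | (symm; apply mk_eq_of_rel; simp [rel])

lemma y_mul_x_mul_y_comm : y k j * (x k i * y k j') = y k j' * (x k i * y k j) := by
  fin_cases j <;> fin_cases j' <;> fin_cases i <;> simp [x, y, ← map_mul, ← mul_assoc] <;>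
    first | (apply mk_eq_of_rel; simp [rel]; done) | (symm; apply mk_eq_of_rel; simp [rel])

lemma y_mul_x_mul_y_comm_assoc :
    y k j * (x k i * (y k j' * t)) = y k j' * (x k i * (y k j * t)) := by
  rw [← mul_assoc (x k i), ← mul_assoc, y_mul_x_mul_y_comm, mul_assoc, mul_assoc]

@[simp] lemma x_mul_e₁ : x k i * e₁ k = 0 := by
  rw [← x_mul_e₂, mul_assoc, e₂_mul_e₁, mul_zero]
@[simp] lemma e₂_mul_x : e₂ k * x k i = 0 := by
  rw [← e₁_mul_x, ← mul_assoc, e₂_mul_e₁, zero_mul]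
@[simp] lemma y_mul_e₂ : y k j * e₂ k = 0 := by
  rw [← y_mul_e₁, mul_assoc, e₁_mul_e₂, mul_zero]
@[simp] lemma e₁_mul_y : e₁ k * y k j = 0 := by
  rw [← e₂_mul_y, ← mul_assoc, e₁_mul_e₂, zero_mul]
@[simp] lemma x_mul_x : x k i * x k i' = 0 := by
  rw [← x_mul_e₂, mul_assoc, e₂_mul_x, mul_zero]
@[simp] lemma y_mul_y : y k j * y k j' = 0 := by
  rw [← y_mul_e₁, mul_assoc, e₁_mul_y, mul_zero]

@[simp] lemma e₁_mul_x_assoc : e₁ k * (x k i * t) = x k i * t := by rw [← mul_assoc, e₁_mul_x]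
@[simp] lemma e₂_mul_y_assoc : e₂ k * (y k j * t) = y k j * t := by rw [← mul_assoc, e₂_mul_y]
@[simp] lemma e₂_mul_x_assoc : e₂ k * (x k i * t) = 0 := by rw [← mul_assoc, e₂_mul_x, zero_mul]
@[simp] lemma e₁_mul_y_assoc : e₁ k * (y k j * t) = 0 := by rw [← mul_assoc, e₁_mul_y, zero_mul]
@[simp] lemma x_mul_x_assoc : x k i * (x k i' * t) = 0 := by rw [← mul_assoc, x_mul_x, zero_mul]
@[simp] lemma y_mul_y_assoc : y k j * (y k j' * t) = 0 := by rw [← mul_assoc, y_mul_y, zero_mul]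

end Relations

variable (k)

noncomputable def z (i j : Fin 2) : A k := x k i * y k j + y k j * x k i

noncomputable def gens : Set (A k) := {e₁ k, e₂ k} ∪ Set.range (x k) ∪ Set.range (y k)

lemma adjoin_gens : Algebra.adjoin k (gens k) = ⊤ := by
  have hsub : mk '' Set.range (FreeAlgebra.ι k) ⊆ gens k := by
    rintro _ ⟨_, ⟨g, rfl⟩, rfl⟩
    cases g <;> simp [gens, x, y, e₁, e₂, X1, X2, Y1, Y2, E1, E2]
  refine eq_top_iff.mpr (le_trans ?_ (Algebra.adjoin_mono hsub))
  rw [← AlgHom.map_adjoin, FreeAlgebra.adjoin_range_ι, Algebra.map_top,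
    (AlgHom.range_eq_top _).mpr mk_surjective]

variable {k}

lemma mem_center_of_commute_gens {a : A k} (h : ∀ g ∈ gens k, Commute a g) :
    a ∈ Subalgebra.center k (A k) :=
  Subalgebra.mem_center_iff.mpr fun _ =>
    (Algebra.commute_of_mem_adjoin_of_forall_mem_commute
      (adjoin_gens k ▸ Algebra.mem_top) h).eq.symm

lemma z_mem_center (i j : Fin 2) : z k i j ∈ Subalgebra.center k (A k) := by
  refine mem_center_of_commute_gens ?_
  rintro g (((rfl | rfl) | ⟨i', rfl⟩) | ⟨j', rfl⟩) <;>
    simp [Commute, SemiconjBy, z, mul_add, add_mul, mul_assoc, x_mul_y_mul_x_comm,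
      y_mul_x_mul_y_comm]

lemma x_mul_y (i j : Fin 2) : x k i * y k j = z k i j * e₁ k := by
  simp [z, add_mul, mul_assoc]

lemma y_mul_x (i j : Fin 2) : y k j * x k i = z k i j * e₂ k := by
  simp [z, add_mul, mul_assoc]

lemma z_mul_z : z k 0 0 * z k 1 1 = z k 0 1 * z k 1 0 := by
  simp [z, mul_add, add_mul, mul_assoc, x_mul_y_mul_x_comm, y_mul_x_mul_y_comm,
    y_mul_x_mul_y_comm_assoc]

variable (k) in
noncomputable def toCenter : MvPolynomial (Fin 4) k →ₐ[k] Subalgebra.center k (A k) :=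
  aeval ![⟨z k 0 0, z_mem_center 0 0⟩, ⟨z k 1 1, z_mem_center 1 1⟩,
    ⟨z k 0 1, z_mem_center 0 1⟩, ⟨z k 1 0, z_mem_center 1 0⟩]

variable (k) in
noncomputable def φ : MvPolynomial (Fin 4) k →ₐ[k] A k :=
  (Subalgebra.center k (A k)).val.comp (toCenter k)

@[simp] lemma φ_X (v : Fin 4) : φ k (X v) = ![z k 0 0, z k 1 1, z k 0 1, z k 1 0] v := by
  fin_cases v <;> simp [φ, toCenter]

@[simp] lemma mul_left_comm_φ (p : MvPolynomial (Fin 4) k) (s t : A k) :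
    s * (φ k p * t) = φ k p * (s * t) := by
  have h : s * φ k p = φ k p * s := Subalgebra.mem_center_iff.mp (toCenter k p).2 s
  rw [← mul_assoc, h, mul_assoc]

lemma φ_quadric : φ k (X 0 * X 1 - X 2 * X 3) = 0 := by
  simp [z_mul_z]

variable (k) in
def IsCentralCombination (a : A k) : Prop :=
  ∃ (p₁ p₂ : MvPolynomial (Fin 4) k) (q r : Fin 2 → MvPolynomial (Fin 4) k),
    a = φ k p₁ * e₁ k + φ k p₂ * e₂ k + ∑ i, φ k (q i) * x k i + ∑ j, φ k (r j) * y k j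

namespace IsCentralCombination

lemma one : IsCentralCombination k 1 :=
  ⟨1, 1, 0, 0, by simp [e₁_add_e₂]⟩

lemma add {a b : A k} (ha : IsCentralCombination k a) (hb : IsCentralCombination k b) :
    IsCentralCombination k (a + b) := by
  obtain ⟨p₁, p₂, q, r, rfl⟩ := ha
  obtain ⟨p₁', p₂', q', r', rfl⟩ := hb
  refine ⟨p₁ + p₁', p₂ + p₂', q + q', r + r', ?_⟩
  simp only [map_add, add_mul, Pi.add_apply, Finset.sum_add_distrib]
  abel

lemma smul {a : A k} (c : k) (ha : IsCentralCombination k a) :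
    IsCentralCombination k (c • a) := by
  obtain ⟨p₁, p₂, q, r, rfl⟩ := ha
  refine ⟨c • p₁, c • p₂, c • q, c • r, ?_⟩
  simp only [map_smul, Pi.smul_apply, smul_mul_assoc, smul_add, Finset.smul_sum]

lemma mul_e₁ {a : A k} (ha : IsCentralCombination k a) :
    IsCentralCombination k (a * e₁ k) := by
  obtain ⟨p₁, p₂, q, r, rfl⟩ := ha
  exact ⟨p₁, 0, 0, r, by simp [add_mul, mul_assoc]⟩

lemma mul_e₂ {a : A k} (ha : IsCentralCombination k a) :
    IsCentralCombination k (a * e₂ k) := by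
  obtain ⟨p₁, p₂, q, r, rfl⟩ := ha
  exact ⟨0, p₂, q, 0, by simp [add_mul, mul_assoc]⟩

lemma mul_x {a : A k} (ha : IsCentralCombination k a) (i : Fin 2) :
    IsCentralCombination k (a * x k i) := by
  obtain ⟨p₁, p₂, q, r, rfl⟩ := ha
  fin_cases i
  · refine ⟨0, r 0 * X 0 + r 1 * X 2, ![p₁, 0], 0, ?_⟩
    simp [add_mul, mul_assoc, y_mul_x, add_comm]
  · refine ⟨0, r 0 * X 3 + r 1 * X 1, ![0, p₁], 0, ?_⟩
    simp [add_mul, mul_assoc, y_mul_x, add_comm]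

lemma mul_y {a : A k} (ha : IsCentralCombination k a) (j : Fin 2) :
    IsCentralCombination k (a * y k j) := by
  obtain ⟨p₁, p₂, q, r, rfl⟩ := ha
  fin_cases j
  · refine ⟨q 0 * X 0 + q 1 * X 3, 0, 0, ![p₂, 0], ?_⟩
    simp [add_mul, mul_assoc, x_mul_y, add_comm]
  · refine ⟨q 0 * X 2 + q 1 * X 1, 0, 0, ![0, p₂], ?_⟩
    simp [add_mul, mul_assoc, x_mul_y, add_comm]

end IsCentralCombination

lemma isCentralCombination (a : A k) : IsCentralCombination k a := by
  suffices h : ∀ f : F k, ∀ b, IsCentralCombination k b → IsCentralCombination k (b * mk f) by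
    obtain ⟨f, rfl⟩ := mk_surjective a
    simpa using h f 1 .one
  intro f
  induction f using FreeAlgebra.induction with
  | grade0 c =>
    intro b hb
    rw [AlgHom.commutes, ← Algebra.commutes, ← Algebra.smul_def]
    exact hb.smul c
  | grade1 g =>
    intro b hb
    cases g
    exacts [hb.mul_x 0, hb.mul_x 1, hb.mul_y 0, hb.mul_y 1, hb.mul_e₁, hb.mul_e₂]
  | mul f₁ f₂ h₁ h₂ =>
    intro b hb
    rw [map_mul, ← mul_assoc]
    exact h₂ _ (h₁ _ hb)
  | add f₁ f₂ h₁ h₂ =>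
    intro b hb
    rw [map_add, mul_add]
    exact (h₁ _ hb).add (h₂ _ hb)

variable (k) in
noncomputable def genMatrix : Gen → Matrix (Fin 2) (Fin 2) (MvPolynomial (Fin 4) k)
  | .x1 => !![0, X 0; 0, 0]
  | .x2 => !![0, X 1; 0, 0]
  | .y1 => !![0, 0; X 2, 0]
  | .y2 => !![0, 0; X 3, 0]
  | .v1 => !![1, 0; 0, 0]
  | .v2 => !![0, 0; 0, 1]

lemma lift_genMatrix_rel ⦃a b : F k⦄ (h : rel k a b) :
    FreeAlgebra.lift k (genMatrix k) a = FreeAlgebra.lift k (genMatrix k) b := by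
  rcases h with h|h|h|h|h|h|h|h|h|h|h|h|h|h|h|h|h <;> obtain ⟨rfl, rfl⟩ := h <;>
  · simp only [E1, E2, X1, X2, Y1, Y2, map_mul, map_add, map_one, map_zero,
      FreeAlgebra.lift_ι_apply]
    ext i j : 1
    fin_cases i <;> fin_cases j <;>
      simp [genMatrix, Matrix.mul_apply, Fin.sum_univ_two] <;> ring

variable (k) in
noncomputable def toMatrix : A k →ₐ[k] Matrix (Fin 2) (Fin 2) (MvPolynomial (Fin 4) k) :=
  RingQuot.liftAlgHom k ⟨FreeAlgebra.lift k (genMatrix k), lift_genMatrix_rel⟩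

lemma toMatrix_mk_ι (g : Gen) : toMatrix k (mk (FreeAlgebra.ι k g)) = genMatrix k g :=
  (RingQuot.liftAlgHom_mkAlgHom_apply k _ lift_genMatrix_rel _).trans
    (FreeAlgebra.lift_ι_apply _ _)

lemma toMatrix_z (i j : Fin 2) :
    toMatrix k (z k i j) =
      algebraMap (MvPolynomial (Fin 4) k) _ (X (Fin.castAdd 2 i) * X (Fin.natAdd 2 j)) := by
  simp only [z, x, y, map_add, map_mul]
  fin_cases i <;> fin_cases j <;>
  · ext a b
    fin_cases a <;> fin_cases b <;>
      simp [X1, X2, Y1, Y2, toMatrix_mk_ι, genMatrix, Matrix.mul_apply, Fin.sum_univ_two,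
        Matrix.algebraMap_eq_diagonal, mul_comm]

lemma toMatrix_φ (p : MvPolynomial (Fin 4) k) :
    toMatrix k (φ k p) = algebraMap _ _ (segre k p) := by
  suffices h : (toMatrix k).comp (φ k) =
      ((Algebra.ofId (MvPolynomial (Fin 4) k) _).restrictScalars k).comp (segre k) from
    DFunLike.congr_fun h p
  refine algHom_ext fun v => ?_
  fin_cases v <;> simp [segre, toMatrix_z]

lemma segre_eq_zero_of_φ_mul_x_eq_zero {p : MvPolynomial (Fin 4) k} (h : φ k p * x k 0 = 0) :
    segre k p = 0 := by
  have h01 := congrFun (congrFun (congrArg (toMatrix k) h) 0) 1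
  rw [map_mul, toMatrix_φ, ← Algebra.smul_def, map_zero] at h01
  simpa [x, X1, toMatrix_mk_ι, genMatrix, X_ne_zero] using h01

lemma φ_eq_zero_of_mul_x_eq_zero {p : MvPolynomial (Fin 4) k} (h : φ k p * x k 0 = 0) :
    φ k p = 0 := by
  have hp : p ∈ Ideal.span {X 0 * X 1 - X 2 * X 3} := by
    rw [← ker_segre]
    exact segre_eq_zero_of_φ_mul_x_eq_zero h
  obtain ⟨g, rfl⟩ := Ideal.mem_span_singleton'.mp hp
  rw [map_mul, φ_quadric, mul_zero]

lemma ker_toCenter : RingHom.ker (toCenter k) = Ideal.span {X 0 * X 1 - X 2 * X 3} := by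
  refine le_antisymm (fun p hp => ?_) ?_
  · have hφ : φ k p = 0 := congrArg Subtype.val (RingHom.mem_ker.mp hp)
    rw [← ker_segre, RingHom.mem_ker]
    exact segre_eq_zero_of_φ_mul_x_eq_zero (by rw [hφ, zero_mul])
  · rw [Ideal.span_singleton_le_iff_mem, RingHom.mem_ker]
    exact Subtype.ext φ_quadric

lemma exists_φ_eq_of_mem_center {a : A k} (ha : a ∈ Subalgebra.center k (A k)) :
    ∃ p, φ k p = a := by
  have hcomm := Subalgebra.mem_center_iff.mp ha
  obtain ⟨p₁, p₂, q, r, hrepr⟩ := isCentralCombination a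
  have h₁ : a * e₁ k = φ k p₁ * e₁ k := by
    calc a * e₁ k = e₁ k * a * e₁ k := by rw [hcomm, mul_assoc, e₁_mul_e₁]
      _ = φ k p₁ * e₁ k := by
        rw [hrepr]
        simp [mul_add, add_mul, mul_assoc]
  have h₂ : a * e₂ k = φ k p₂ * e₂ k := by
    calc a * e₂ k = e₂ k * a * e₂ k := by rw [hcomm, mul_assoc, e₂_mul_e₂]
      _ = φ k p₂ * e₂ k := by
        rw [hrepr]
        simp [mul_add, add_mul, mul_assoc]
  have hsplit : a = φ k p₁ * e₁ k + φ k p₂ * e₂ k := by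
    rw [← h₁, ← h₂, ← mul_add, e₁_add_e₂, mul_one]
  have hx : φ k (p₁ - p₂) * x k 0 = 0 := by
    have h := hcomm (x k 0)
    rw [hsplit] at h
    simp only [mul_add, add_mul, mul_assoc, mul_left_comm_φ, x_mul_e₁, x_mul_e₂, e₁_mul_x,
      e₂_mul_x, mul_zero, zero_add, add_zero] at h
    rw [map_sub, sub_mul, h, sub_self]
  have hp : φ k p₁ = φ k p₂ := sub_eq_zero.mp (by rw [← map_sub, φ_eq_zero_of_mul_x_eq_zero hx])
  exact ⟨p₁, by rw [hsplit, ← hp, ← mul_add, e₁_add_e₂, mul_one]⟩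

lemma toCenter_surjective : Function.Surjective (toCenter k) := fun a =>
  let ⟨p, hp⟩ := exists_φ_eq_of_mem_center a.2
  ⟨p, Subtype.ext hp⟩

/-- The center of the conifold quiver algebra
`A = kQ/∂W` (quiver with two vertices, arrows `x1, x2 : 2 → 1`, `y1, y2 : 1 → 2`,
superpotential `W = y1 x2 y2 x1 − y2 x2 y1 x1`) is isomorphic to
`k[a,b,c,d]/(ab − cd)`. -/
theorem stmt12 :
    Nonempty (Subalgebra.center k (A k) ≃ₐ[k]
      (MvPolynomial (Fin 4) k ⧸
        Ideal.span {(MvPolynomial.X 0 * MvPolynomial.X 1 -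
          MvPolynomial.X 2 * MvPolynomial.X 3 : MvPolynomial (Fin 4) k)})) :=
  ⟨((Ideal.quotientEquivAlgOfEq k ker_toCenter).symm.trans
    (Ideal.quotientKerAlgEquivOfSurjective toCenter_surjective)).symm⟩

end Stmt12
end

section
/- Let Z be a commutative ring, A an associative Z-algebra which as a Z-module decomposes as A = ⊕_{i,j ∈ I} e_j A e_i for a finite complete set of orthogonal idempotents {e_i}. Fix k ∈ I and suppose that for all i, j ∈ I the natural map e_j A e_i → Hom_Z(e_i A e_k, e_j A e_k), d ↦ (a ↦ da), is an isomorphism of Z-modules. Then A is isomorphic as a Z-algebra to End_Z(A e_k). -/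
/-!
Left multiplication is an algebra map `A → End_Z(A e_k)`. By the Peirce decompositions
`a = ∑ e_j a e_i` and `x = ∑ e_i x` (for `x ∈ A e_k`), an element of `A` is determined by its
corners `e_j a e_i`, and an endomorphism `f` of `A e_k` by its entries
`e_j f(-) : e_i A e_k → e_j A e_k`. The hypothesis matches corners with entries one by one, which
makes left multiplication injective and surjective.
-/

section Stmt17

variable {Z A I : Type*} [CommRing Z] [Ring A] [Algebra Z A]

/-- The `Z`-submodule `e_j A e_i` of `A`. -/
def cornerPiece (e : I → A) (i j : I) : Submodule Z A where
  carrier := {x | e j * x * e i = x}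
  add_mem' := by
    intro a b ha hb
    simp only [Set.mem_setOf_eq] at *
    rw [mul_add, add_mul, ha, hb]
  zero_mem' := by simp
  smul_mem' := by
    intro z x hx
    simp only [Set.mem_setOf_eq] at *
    rw [mul_smul_comm, smul_mul_assoc, hx]

/-- The `Z`-submodule `A e_k` of `A`. -/
def colPiece (e : I → A) (k : I) : Submodule Z A where
  carrier := {x | x * e k = x}
  add_mem' := by
    intro a b ha hb
    simp only [Set.mem_setOf_eq] at *
    rw [add_mul, ha, hb]
  zero_mem' := by simp
  smul_mem' := by
    intro z x hx
    simp only [Set.mem_setOf_eq] at *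
    rw [smul_mul_assoc, hx]

section Corners

variable {e : I → A} {i j k : I}

theorem mem_cornerPiece_iff {a : A} : a ∈ cornerPiece (Z := Z) e i j ↔ e j * a * e i = a :=
  Iff.rfl

theorem mem_colPiece_iff {a : A} : a ∈ colPiece (Z := Z) e k ↔ a * e k = a :=
  Iff.rfl

theorem mul_mul_mem_cornerPiece (hi : IsIdempotentElem (e i)) (hj : IsIdempotentElem (e j))
    (a : A) : e j * a * e i ∈ cornerPiece (Z := Z) e i j := by
  rw [mem_cornerPiece_iff, ← mul_assoc, ← mul_assoc, hj.eq, mul_assoc _ (e i), hi.eq]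

theorem idem_mul_of_mem_cornerPiece (hj : IsIdempotentElem (e j)) {a : A}
    (ha : a ∈ cornerPiece (Z := Z) e i j) : e j * a = a := by
  rw [← mem_cornerPiece_iff.mp ha, ← mul_assoc, ← mul_assoc, hj.eq]

theorem mul_idem_of_mem_cornerPiece (hi : IsIdempotentElem (e i)) {a : A}
    (ha : a ∈ cornerPiece (Z := Z) e i j) : a * e i = a := by
  rw [← mem_cornerPiece_iff.mp ha, mul_assoc, hi.eq]

theorem cornerPiece_le_colPiece (hk : IsIdempotentElem (e k)) :
    cornerPiece (Z := Z) e k i ≤ colPiece (Z := Z) e k :=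
  fun _ ha ↦ mul_idem_of_mem_cornerPiece hk ha

theorem mul_mem_colPiece (a : A) {x : A} (hx : x ∈ colPiece (Z := Z) e k) :
    a * x ∈ colPiece (Z := Z) e k := by
  rw [mem_colPiece_iff, mul_assoc, mem_colPiece_iff.mp hx]

theorem mul_mem_cornerPiece_of_mem_colPiece (hj : IsIdempotentElem (e j)) {x : A}
    (hx : x ∈ colPiece (Z := Z) e k) : e j * x ∈ cornerPiece (Z := Z) e k j := by
  rw [mem_cornerPiece_iff, ← mul_assoc, hj.eq, mul_assoc, mem_colPiece_iff.mp hx]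

theorem sum_mul_eq_self [Fintype I] (hsum : ∑ i, e i = 1) (x : A) : ∑ i, e i * x = x := by
  rw [← Finset.sum_mul, hsum, one_mul]

theorem sum_sum_mul_mul_eq_self [Fintype I] (hsum : ∑ i, e i = 1) (a : A) :
    ∑ j, ∑ i, e j * a * e i = a := by
  simp only [← Finset.mul_sum, ← Finset.sum_mul, hsum, mul_one, one_mul]

end Corners

def colMulLeft (e : I → A) (k : I) : A →ₐ[Z] Module.End Z (colPiece (Z := Z) e k) where
  toFun a := (LinearMap.mulLeft Z a).restrict fun _ hx ↦ mul_mem_colPiece a hx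
  map_one' := LinearMap.ext fun x ↦ Subtype.ext (one_mul (x : A))
  map_mul' a b := LinearMap.ext fun x ↦ Subtype.ext (mul_assoc a b x)
  map_zero' := LinearMap.ext fun x ↦ Subtype.ext (zero_mul (x : A))
  map_add' a b := LinearMap.ext fun x ↦ Subtype.ext (add_mul a b x)
  commutes' z := LinearMap.ext fun x ↦ Subtype.ext (Algebra.smul_def z (x : A)).symm

section Bijective

variable [Fintype I] {e : I → A} {k : I}

theorem injective_colMulLeft (hidem : ∀ i, IsIdempotentElem (e i)) (hsum : ∑ i, e i = 1)
    (hinj : ∀ i j : I, ∀ d d' : A, d ∈ cornerPiece (Z := Z) e i j →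
      d' ∈ cornerPiece (Z := Z) e i j →
      (∀ a ∈ cornerPiece (Z := Z) e k i, d * a = d' * a) → d = d') :
    Function.Injective (colMulLeft (Z := Z) e k) := by
  intro a b hab
  have hcol : ∀ x ∈ colPiece (Z := Z) e k, a * x = b * x := fun x hx ↦
    congrArg Subtype.val (LinearMap.congr_fun hab ⟨x, hx⟩)
  have hcorner : ∀ i j, e j * a * e i = e j * b * e i := by
    intro i j
    refine hinj i j _ _ (mul_mul_mem_cornerPiece (hidem i) (hidem j) a)
      (mul_mul_mem_cornerPiece (hidem i) (hidem j) b) fun c hc ↦ ?_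
    have hc' : e i * c = c := idem_mul_of_mem_cornerPiece (hidem i) hc
    rw [mul_assoc, mul_assoc, hc', mul_assoc, mul_assoc, hc',
      hcol c (cornerPiece_le_colPiece (hidem k) hc)]
  rw [← sum_sum_mul_mul_eq_self hsum a, ← sum_sum_mul_mul_eq_self hsum b]
  simp only [hcorner]

theorem surjective_colMulLeft (hidem : ∀ i, IsIdempotentElem (e i)) (hsum : ∑ i, e i = 1)
    (hsurj : ∀ i j : I,
      ∀ f : (cornerPiece (Z := Z) e k i) →ₗ[Z] (cornerPiece (Z := Z) e k j),
      ∃ d ∈ cornerPiece (Z := Z) e i j,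
        ∀ a : (cornerPiece (Z := Z) e k i), (f a : A) = d * (a : A)) :
    Function.Surjective (colMulLeft (Z := Z) e k) := by
  intro f
  -- `d i j` represents the `(j, i)` matrix entry `e_j f(-)` of `f` on `e_i A e_k`.
  choose d hd hdf using fun i j ↦ hsurj i j <|
    (LinearMap.mulLeft Z (e j)).restrict (fun _ ↦ mul_mem_cornerPiece_of_mem_colPiece (hidem j))
      ∘ₗ f ∘ₗ Submodule.inclusion (cornerPiece_le_colPiece (hidem k))
  refine ⟨∑ j, ∑ i, d i j, LinearMap.ext fun x ↦ Subtype.ext ?_⟩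
  have hx : ∀ i, e i * (x : A) ∈ colPiece (Z := Z) e k := fun i ↦ mul_mem_colPiece _ x.2
  have hdx : ∀ i j, d i j * x = e j * f ⟨e i * x, hx i⟩ := fun i j ↦ by
    rw [← mul_idem_of_mem_cornerPiece (hidem i) (hd i j), mul_assoc,
      ← hdf i j ⟨e i * x, mul_mem_cornerPiece_of_mem_colPiece (hidem i) x.2⟩]
    rfl
  have hxsum : ∑ i, (⟨e i * x, hx i⟩ : colPiece (Z := Z) e k) = x :=
    Subtype.ext <| by rw [Submodule.coe_sum]; exact sum_mul_eq_self hsum x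
  calc (∑ j, ∑ i, d i j) * x = ∑ i, ∑ j, d i j * x := by
        simp only [Finset.sum_mul]; exact Finset.sum_comm
    _ = ∑ i, (f ⟨e i * x, hx i⟩ : A) := by simp only [hdx, sum_mul_eq_self hsum]
    _ = f x := by rw [← Submodule.coe_sum, ← map_sum, hxsum]

end Bijective

theorem stmt17_general [Fintype I]
    (e : I → A)
    (hidem : ∀ i, IsIdempotentElem (e i))
    (hsum : ∑ i, e i = 1)
    (k : I)
    -- injectivity of `d ↦ (a ↦ d a)` on `e_j A e_i`:
    (hinj : ∀ i j : I, ∀ d d' : A, d ∈ cornerPiece (Z := Z) e i j →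
      d' ∈ cornerPiece (Z := Z) e i j →
      (∀ a ∈ cornerPiece (Z := Z) e k i, d * a = d' * a) → d = d')
    -- surjectivity: every `Z`-linear map `e_i A e_k → e_j A e_k` is left multiplication
    -- by some `d ∈ e_j A e_i`:
    (hsurj : ∀ i j : I,
      ∀ f : (cornerPiece (Z := Z) e k i) →ₗ[Z] (cornerPiece (Z := Z) e k j),
      ∃ d ∈ cornerPiece (Z := Z) e i j,
        ∀ a : (cornerPiece (Z := Z) e k i), (f a : A) = d * (a : A)) :
    Nonempty (A ≃ₐ[Z] Module.End Z (colPiece (Z := Z) e k)) :=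
  ⟨AlgEquiv.ofBijective (colMulLeft e k)
    ⟨injective_colMulLeft hidem hsum hinj, surjective_colMulLeft hidem hsum hsurj⟩⟩

/-- Let `Z` be a commutative ring and `A` an associative `Z`-algebra
with a finite complete set of orthogonal idempotents `{e i}` (so that `A = ⊕_{i,j} e_j A
e_i` as a `Z`-module).  Fix `k`, and suppose for all `i, j` the natural map
`e_j A e_i → Hom_Z(e_i A e_k, e_j A e_k)`, `d ↦ (a ↦ d a)`, is an isomorphism of
`Z`-modules (stated below as injectivity and surjectivity of left multiplication).  Then
`A` is isomorphic as a `Z`-algebra to `End_Z(A e_k)`. -/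
theorem stmt17 [Fintype I]
    (e : I → A)
    (hidem : ∀ i, IsIdempotentElem (e i))
    (horth : ∀ i j, i ≠ j → e i * e j = 0)
    (hsum : ∑ i, e i = 1)
    (k : I)
    -- injectivity of `d ↦ (a ↦ d a)` on `e_j A e_i`:
    (hinj : ∀ i j : I, ∀ d d' : A, d ∈ cornerPiece (Z := Z) e i j →
      d' ∈ cornerPiece (Z := Z) e i j →
      (∀ a ∈ cornerPiece (Z := Z) e k i, d * a = d' * a) → d = d')
    -- surjectivity: every `Z`-linear map `e_i A e_k → e_j A e_k` is left multiplication
    -- by some `d ∈ e_j A e_i`: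
    (hsurj : ∀ i j : I,
      ∀ f : (cornerPiece (Z := Z) e k i) →ₗ[Z] (cornerPiece (Z := Z) e k j),
      ∃ d ∈ cornerPiece (Z := Z) e i j,
        ∀ a : (cornerPiece (Z := Z) e k i), (f a : A) = d * (a : A)) :
    Nonempty (A ≃ₐ[Z] Module.End Z (colPiece (Z := Z) e k)) :=
  stmt17_general e hidem hsum k hinj hsurj

end Stmt17
end
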